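/- Let q be a power of 2 and m ≥ 1. For the LMUC over 𝔽_{q^m} with transfer matrix F = [[1,1,1],[1,1,0],[1,0,1]], the rate point (1,1) is not achievable: there is no unambiguous m-code C₁ × C₂ with |C₁| = q^m and |C₂| = q^m. More strongly, any sequence of unambiguous m-codes has rate pairs (α₁, α₂) with 2α₁ + α₂ ≤ 2, so (1,1) is bounded away from the achievable region. -/
import Mathlib

lemma stmt17_key {q e m : ℕ} (he : 0 < e) (hq : q = 2 ^ e) (hm : 0 < m)
    {L : Type*} [Field L] [Fintype L] (hL : Fintype.card L = q ^ m)
    (C1 : Set L) (C2 : Set (L × L))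
    (h1 : ∀ x ∈ C1, ∀ x' ∈ C1, x ≠ x' →
        Disjoint {w : L | ∃ c ∈ C2, w = x + c.1 + c.2}
          {w : L | ∃ c ∈ C2, w = x' + c.1 + c.2})
    (h2 : ∀ c ∈ C2, ∀ c' ∈ C2, c ≠ c' →
        Disjoint {w : L × L | ∃ x ∈ C1, w = (x, x) + c}
          {w : L × L | ∃ x ∈ C1, w = (x, x) + c'}) :
    C1.ncard ^ 2 * C2.ncard ≤ q ^ (2 * m) := by
  have htwo : (2 : L) = 0 := by
    have h0 : ((Fintype.card L : ℕ) : L) = 0 := FiniteField.cast_card_eq_zero L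
    rw [hL, hq, ← pow_mul] at h0
    push_cast at h0
    have hne : e * m ≠ 0 := Nat.mul_ne_zero he.ne' hm.ne'
    exact pow_eq_zero_iff hne |>.mp h0
  -- the injection
  set S : Set (L × L × (L × L)) := C1 ×ˢ C1 ×ˢ C2 with hS
  set f : L × L × (L × L) → L × L :=
    fun p => (p.1 + p.2.2.1 + p.2.2.2, p.2.1 + p.2.2.1) with hf
  have hinj : Set.InjOn f S := by
    rintro ⟨x, y, c⟩ ⟨hx, hy, hc⟩ ⟨x', y', c'⟩ ⟨hx', hy', hc'⟩ hEq
    simp only [hf, Prod.mk.injEq] at hEq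
    obtain ⟨e1, e2⟩ := hEq
    -- first, x = x'
    have hxx : x = x' := by
      by_contra hne
      have hd := h1 x hx x' hx' hne
      rw [Set.disjoint_left] at hd
      exact hd ⟨c, hc, rfl⟩ ⟨c', hc', e1⟩
    subst hxx
    have hcsum : c.1 + c.2 = c'.1 + c'.2 := by
      have := e1
      linear_combination e1
    -- second coordinate of fan 2
    have e2' : y + c.2 = y' + c'.2 := by
      linear_combination e2 + hcsum + (c'.1 - c.1) * htwo
    have hcc : c = c' := by
      by_contra hne
      have hd := h2 c hc c' hc' hne
      rw [Set.disjoint_left] at hd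
      have hw1 : ((y, y) + c : L × L) ∈ {w : L × L | ∃ x ∈ C1, w = (x, x) + c} :=
        ⟨y, hy, rfl⟩
      have hw2 : ((y, y) + c : L × L) ∈ {w : L × L | ∃ x ∈ C1, w = (x, x) + c'} := by
        refine ⟨y', hy', ?_⟩
        rw [Prod.ext_iff]
        exact ⟨e2, e2'⟩
      exact hd hw1 hw2
    subst hcc
    have hyy : y = y' := by exact add_right_cancel e2
    subst hyy
    rfl
  -- count
  have hcard : S.ncard = C1.ncard ^ 2 * C2.ncard := by
    have hN : Nat.card S = Nat.card C1 * (Nat.card C1 * Nat.card C2) := by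
      rw [hS, Nat.card_congr (Equiv.Set.prod C1 (C1 ×ˢ C2)), Nat.card_prod,
        Nat.card_congr (Equiv.Set.prod C1 C2), Nat.card_prod]
    simp only [Nat.card_coe_set_eq] at hN
    rw [hN]; ring
  have hle : S.ncard ≤ q ^ (2 * m) := by
    calc S.ncard = (f '' S).ncard := (Set.ncard_image_of_injOn hinj).symm
    _ ≤ (Set.univ : Set (L × L)).ncard :=
        Set.ncard_le_ncard (Set.subset_univ _) Set.finite_univ
    _ = q ^ (2 * m) := by
        rw [Set.ncard_univ, Nat.card_eq_fintype_card, Fintype.card_prod, hL,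
          ← pow_add, two_mul]
  rwa [hcard] at hle

/-- for `q` a power of 2 and the LMUC over `𝔽_{q^m}` with transfer
matrix `[[1,1,1],[1,1,0],[1,0,1]]`, there is no unambiguous `m`-code with
`|C₁| = |C₂| = q^m` (rate `(1,1)` not achievable); more strongly, every unambiguous
`m`-code satisfies `|C₁|² · |C₂| ≤ q^{2m}` (i.e. `2α₁ + α₂ ≤ 2`). -/
theorem stmt17 {q e m : ℕ} (he : 0 < e) (hq : q = 2 ^ e) (hm : 0 < m)
    {L : Type*} [Field L] [Fintype L] (hL : Fintype.card L = q ^ m) :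
    (¬ ∃ (C1 : Set L) (C2 : Set (L × L)),
      (∀ x ∈ C1, ∀ x' ∈ C1, x ≠ x' →
        Disjoint {w : L | ∃ c ∈ C2, w = x + c.1 + c.2}
          {w : L | ∃ c ∈ C2, w = x' + c.1 + c.2}) ∧
      (∀ c ∈ C2, ∀ c' ∈ C2, c ≠ c' →
        Disjoint {w : L × L | ∃ x ∈ C1, w = (x, x) + c}
          {w : L × L | ∃ x ∈ C1, w = (x, x) + c'}) ∧
      C1.ncard = q ^ m ∧ C2.ncard = q ^ m) ∧
    (∀ (C1 : Set L) (C2 : Set (L × L)),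
      (∀ x ∈ C1, ∀ x' ∈ C1, x ≠ x' →
        Disjoint {w : L | ∃ c ∈ C2, w = x + c.1 + c.2}
          {w : L | ∃ c ∈ C2, w = x' + c.1 + c.2}) →
      (∀ c ∈ C2, ∀ c' ∈ C2, c ≠ c' →
        Disjoint {w : L × L | ∃ x ∈ C1, w = (x, x) + c}
          {w : L × L | ∃ x ∈ C1, w = (x, x) + c'}) →
      C1.ncard ^ 2 * C2.ncard ≤ q ^ (2 * m)) := by
  have key := fun C1 C2 h1 h2 => stmt17_key he hq hm hL C1 C2 h1 h2
  refine ⟨?_, key⟩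
  rintro ⟨C1, C2, h1, h2, hc1, hc2⟩
  have hb := key C1 C2 h1 h2
  rw [hc1, hc2, ← pow_mul, ← pow_add] at hb
  have hq2 : 2 ≤ q ^ m := by
    rw [hq, ← pow_mul]
    calc 2 = 2 ^ 1 := (pow_one 2).symm
    _ ≤ 2 ^ (e * m) := Nat.pow_le_pow_right (by norm_num) (Nat.one_le_iff_ne_zero.mpr (by positivity))
  have : q ^ (m * 2 + m) ≤ q ^ (2 * m) := hb
  have hlt : q ^ (2 * m) < q ^ (m * 2 + m) := by
    apply Nat.pow_lt_pow_right
    · rw [hq]; exact Nat.one_lt_two_pow_iff.mpr (by omega)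
    · omega
  omega
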